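/- Let φ(u) := (e^{-u}(-2+4u-u²) + e^{-2u}(4-4u-u²) - 2e^{-3u})/(1-e^{-u})³ for u > 0, extended by φ(0) = 1. Then the radially symmetric function g : ℝ² → ℝ defined by g(x) = φ(π‖x‖²) is Lebesgue integrable on ℝ². -/

import Mathlib

open MeasureTheory

/-- The radial profile `φ` of the truncated pair correlation. -/
noncomputable def phi (u : ℝ) : ℝ :=
  (Real.exp (-u) * (-2 + 4*u - u^2) + Real.exp (-2*u) * (4 - 4*u - u^2)
    - 2 * Real.exp (-3*u)) / (1 - Real.exp (-u))^3

noncomputable def phiExt (u : ℝ) : ℝ := if u = 0 then 1 else phi u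

/-! Near `0` the numerator of `φ` vanishes to third order: it and its first two derivatives vanish
at `0` and its third derivative is bounded on `[0, 1]`, so three integrations give
`|numerator| ≤ C u³`, while `1 - e^{-u} ≥ u / 2` there; hence `φ` is bounded on `(0, 1]`. For
`u ≥ 1` the numerator is at most `2 (2 + u)² e^{-u}` and `1 - e^{-u} ≥ 1 / 2`. Altogether
`|φ(u)| ≤ 512 e^{-u/2}` on `[0, ∞)`, so `g` is dominated by the Gaussian `512 e^{-π‖x‖²/2}`. -/

open Real Set

theorem abs_le_div_mul_pow_succ_of_hasDerivAt {f f' : ℝ → ℝ} {a C : ℝ} {n : ℕ}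
    (hf : ∀ u, HasDerivAt f (f' u) u) (h0 : f 0 = 0)
    (hf' : ∀ u ∈ Icc 0 a, |f' u| ≤ C * u ^ n) :
    ∀ u ∈ Icc 0 a, |f u| ≤ C / (n + 1) * u ^ (n + 1) := by
  refine image_norm_le_of_norm_deriv_right_le_deriv_boundary
    (fun u _ => (hf u).continuousAt.continuousWithinAt) (fun u _ => (hf u).hasDerivWithinAt)
    (B' := fun u => C * u ^ n) (by simp [h0]) (fun u => ?_)
    (fun u hu => hf' u (Ico_subset_Icc_self hu))
  refine ((hasDerivAt_pow (n + 1) u).const_mul (C / (n + 1))).congr_deriv ?_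
  push_cast
  field_simp

theorem exp_neg_le_inv_one_add {u : ℝ} (hu : 0 ≤ u) : exp (-u) ≤ (1 + u)⁻¹ := by
  rw [exp_neg]
  exact inv_anti₀ (by positivity) (by linarith [add_one_le_exp u])

theorem integrable_exp_neg_mul_sq_norm {V : Type*} [NormedAddCommGroup V] [InnerProductSpace ℝ V]
    [FiniteDimensional ℝ V] [MeasurableSpace V] [BorelSpace V] {b : ℝ} (hb : 0 < b) :
    Integrable (fun v : V => exp (-b * ‖v‖ ^ 2)) := by
  have h := (GaussianFourier.integrable_cexp_neg_mul_sq_norm_add (V := V) (b := b)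
    (by simpa using hb) 0 0).norm
  simp only [zero_mul, add_zero, Complex.norm_exp] at h
  convert h using 2 with v
  norm_cast

theorem hasDerivAt_exp_mul_mul_quadratic (k a b c u : ℝ) :
    HasDerivAt (fun u => exp (k * u) * (a + b * u + c * u ^ 2))
      (exp (k * u) * ((k * a + b) + (k * b + 2 * c) * u + k * c * u ^ 2)) u := by
  have hexp : HasDerivAt (fun u => exp (k * u)) (exp (k * u) * k) u := by
    simpa using ((hasDerivAt_id u).const_mul k).exp
  have hquad : HasDerivAt (fun u => a + b * u + c * u ^ 2) (b + c * (2 * u)) u :=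
    (((hasDerivAt_id u).const_mul b).const_add a).add ((hasDerivAt_pow 2 u).const_mul c)
      |>.congr_deriv (by simp)
  exact (hexp.mul hquad).congr_deriv (by ring)

noncomputable def phiNum (u : ℝ) : ℝ :=
  exp (-u) * (-2 + 4*u - u^2) + exp (-2*u) * (4 - 4*u - u^2) - 2 * exp (-3*u)

noncomputable def phiNum' (u : ℝ) : ℝ :=
  exp (-u) * (6 - 6*u + u^2) + exp (-2*u) * (-12 + 6*u + 2*u^2) + 6 * exp (-3*u)

noncomputable def phiNum'' (u : ℝ) : ℝ :=
  exp (-u) * (-12 + 8*u - u^2) + exp (-2*u) * (30 - 8*u - 4*u^2) - 18 * exp (-3*u)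

noncomputable def phiNum''' (u : ℝ) : ℝ :=
  exp (-u) * (20 - 10*u + u^2) + exp (-2*u) * (-68 + 8*u + 8*u^2) + 54 * exp (-3*u)

theorem hasDerivAt_phiNum (u : ℝ) : HasDerivAt phiNum (phiNum' u) u := by
  have h := ((hasDerivAt_exp_mul_mul_quadratic (-1) (-2) 4 (-1) u).add
    (hasDerivAt_exp_mul_mul_quadratic (-2) 4 (-4) (-1) u)).sub
    (hasDerivAt_exp_mul_mul_quadratic (-3) 2 0 0 u)
  refine (h.congr_deriv ?_).congr_of_eventuallyEq (.of_forall fun v => ?_) <;>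
    simp only [phiNum, phiNum', Pi.add_apply, Pi.sub_apply] <;> ring_nf

theorem hasDerivAt_phiNum' (u : ℝ) : HasDerivAt phiNum' (phiNum'' u) u := by
  have h := ((hasDerivAt_exp_mul_mul_quadratic (-1) 6 (-6) 1 u).add
    (hasDerivAt_exp_mul_mul_quadratic (-2) (-12) 6 2 u)).add
    (hasDerivAt_exp_mul_mul_quadratic (-3) 6 0 0 u)
  refine (h.congr_deriv ?_).congr_of_eventuallyEq (.of_forall fun v => ?_) <;>
    simp only [phiNum', phiNum'', Pi.add_apply] <;> ring_nf

theorem hasDerivAt_phiNum'' (u : ℝ) : HasDerivAt phiNum'' (phiNum''' u) u := by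
  have h := ((hasDerivAt_exp_mul_mul_quadratic (-1) (-12) 8 (-1) u).add
    (hasDerivAt_exp_mul_mul_quadratic (-2) 30 (-8) (-4) u)).sub
    (hasDerivAt_exp_mul_mul_quadratic (-3) 18 0 0 u)
  refine (h.congr_deriv ?_).congr_of_eventuallyEq (.of_forall fun v => ?_) <;>
    simp only [phiNum'', phiNum''', Pi.add_apply, Pi.sub_apply] <;> ring_nf

-- `169 = (20 + 10 + 1) + (68 + 8 + 8) + 54`, the sum of the absolute values of the coefficients.
theorem abs_phiNum'''_le {u : ℝ} (hu : u ∈ Icc (0 : ℝ) 1) : |phiNum''' u| ≤ 169 := by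
  obtain ⟨h0, h1⟩ := hu
  have e1 : exp (-u) ≤ 1 := exp_le_one_iff.2 (by linarith)
  have e2 : exp (-2*u) ≤ 1 := exp_le_one_iff.2 (by linarith)
  have e3 : exp (-3*u) ≤ 1 := exp_le_one_iff.2 (by linarith)
  have p1 := exp_pos (-u)
  have p2 := exp_pos (-2*u)
  have p3 := exp_pos (-3*u)
  rw [abs_le]
  constructor <;> simp only [phiNum'''] <;>
    nlinarith [mul_nonneg p1.le (by nlinarith : (0:ℝ) ≤ 20 - 10*u + u^2),
      mul_nonneg p2.le (by nlinarith : (0:ℝ) ≤ 68 - 8*u - 8*u^2),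
      mul_le_of_le_one_left (by nlinarith : (0:ℝ) ≤ 20 - 10*u + u^2) e1,
      mul_le_of_le_one_left (by nlinarith : (0:ℝ) ≤ 68 - 8*u - 8*u^2) e2]

theorem abs_phiNum_le_of_mem_Icc {u : ℝ} (hu : u ∈ Icc (0 : ℝ) 1) :
    |phiNum u| ≤ 169 / 6 * u ^ 3 := by
  have h2 := abs_le_div_mul_pow_succ_of_hasDerivAt (n := 0) hasDerivAt_phiNum''
    (by norm_num [phiNum'']) (fun v hv => by simpa using abs_phiNum'''_le hv)
  have h1 := abs_le_div_mul_pow_succ_of_hasDerivAt hasDerivAt_phiNum'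
    (by norm_num [phiNum']) h2
  have h0 := abs_le_div_mul_pow_succ_of_hasDerivAt hasDerivAt_phiNum
    (by norm_num [phiNum]) h1
  convert h0 u hu using 2
  norm_num

theorem abs_phiNum_le {u : ℝ} (hu : 0 ≤ u) : |phiNum u| ≤ 2 * (2 + u) ^ 2 * exp (-u) := by
  have e2 : exp (-2*u) ≤ exp (-u) := exp_le_exp.2 (by linarith)
  have e3 : exp (-3*u) ≤ exp (-u) := exp_le_exp.2 (by linarith)
  have p1 := exp_pos (-u)
  have p2 := exp_pos (-2*u)
  have p3 := exp_pos (-3*u)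
  rw [abs_le]
  constructor <;> simp only [phiNum] <;>
    nlinarith [mul_nonneg (sub_nonneg.2 e2) (by nlinarith : (0:ℝ) ≤ 4 + 4*u + u^2),
      mul_nonneg p1.le (by nlinarith : (0:ℝ) ≤ 4 + 2*u^2),
      mul_nonneg p2.le (by nlinarith : (0:ℝ) ≤ 8*u + 2*u^2)]

theorem phi_eq_phiNum_div (u : ℝ) : phi u = phiNum u / (1 - exp (-u)) ^ 3 := rfl

theorem abs_phi_le_of_mem_Ioc {u : ℝ} (hu : u ∈ Ioc (0 : ℝ) 1) : |phi u| ≤ 256 := by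
  obtain ⟨h0, h1⟩ := hu
  have hden : u / 2 ≤ 1 - exp (-u) := by
    have hinv : (1 + u)⁻¹ ≤ 1 - u / 2 := by
      rw [inv_le_iff_one_le_mul₀ (by positivity)]
      nlinarith
    linarith [exp_neg_le_inv_one_add h0.le]
  have hden3 : 0 < (1 - exp (-u)) ^ 3 := pow_pos (by linarith) 3
  rw [phi_eq_phiNum_div, abs_div, abs_of_pos hden3, div_le_iff₀ hden3]
  calc |phiNum u| ≤ 169 / 6 * u ^ 3 := abs_phiNum_le_of_mem_Icc ⟨h0.le, h1⟩
    _ ≤ 256 * (u / 2) ^ 3 := by nlinarith [pow_pos h0 3]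
    _ ≤ 256 * (1 - exp (-u)) ^ 3 := by gcongr

theorem abs_phi_le_of_one_le {u : ℝ} (hu : 1 ≤ u) : |phi u| ≤ 256 * exp (-u / 2) := by
  have hden : 1 / 2 ≤ 1 - exp (-u) := by
    have hinv : (1 + u)⁻¹ ≤ 1 / 2 := by
      rw [inv_le_iff_one_le_mul₀ (by positivity)]
      linarith
    linarith [exp_neg_le_inv_one_add (by linarith : (0 : ℝ) ≤ u)]
  have hpoly : (2 + u) ^ 2 ≤ 16 * exp (u / 2) := by
    have h := add_one_le_exp (u / 4)
    calc (2 + u) ^ 2 ≤ 16 * (u / 4 + 1) ^ 2 := by nlinarith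
      _ ≤ 16 * exp (u / 4) ^ 2 := by gcongr
      _ = 16 * exp (u / 2) := by rw [← exp_nat_mul]; ring_nf
  have hden3 : 0 < (1 - exp (-u)) ^ 3 := pow_pos (by linarith) 3
  rw [phi_eq_phiNum_div, abs_div, abs_of_pos hden3, div_le_iff₀ hden3]
  calc |phiNum u| ≤ 2 * (2 + u) ^ 2 * exp (-u) := abs_phiNum_le (by linarith)
    _ ≤ 2 * (16 * exp (u / 2)) * exp (-u) := by gcongr
    _ = 32 * exp (-u / 2) := by rw [mul_assoc, mul_assoc, ← exp_add]; ring_nf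
    _ = 256 * exp (-u / 2) * (1 / 2) ^ 3 := by ring
    _ ≤ 256 * exp (-u / 2) * (1 - exp (-u)) ^ 3 := by gcongr

theorem abs_phiExt_le {u : ℝ} (hu : 0 ≤ u) : |phiExt u| ≤ 512 * exp (-u / 2) := by
  rcases hu.eq_or_lt with rfl | hpos
  · simp [phiExt]
  rw [phiExt, if_neg hpos.ne']
  rcases le_total u 1 with hle | hge
  · linarith [abs_phi_le_of_mem_Ioc ⟨hpos, hle⟩, add_one_le_exp (-u / 2)]
  · linarith [abs_phi_le_of_one_le hge, exp_pos (-u / 2)]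

theorem measurable_phiExt : Measurable phiExt := by
  unfold phiExt phi
  exact Measurable.ite measurableSet_eq measurable_const (by fun_prop)

/-- The radially symmetric function `g(x) = φ(π ‖x‖²)` is Lebesgue integrable
on `ℝ²`. -/
theorem stmt_5 :
    Integrable (fun x : EuclideanSpace ℝ (Fin 2) => phiExt (Real.pi * ‖x‖^2)) := by
  refine ((integrable_exp_neg_mul_sq_norm (b := π / 2) (by positivity)).const_mul 512).mono'
    (measurable_phiExt.comp (by fun_prop)).aestronglyMeasurable (.of_forall fun x => ?_)
  calc ‖phiExt (π * ‖x‖ ^ 2)‖ ≤ 512 * exp (-(π * ‖x‖ ^ 2) / 2) := abs_phiExt_le (by positivity)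
    _ = 512 * exp (-(π / 2) * ‖x‖ ^ 2) := by ring_nf
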